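/- Let r be a W-valued 1-form on ℝ^{2n} and D = −δ + d + (i/ℏ)[r,·]. Then for every W-valued form a of homogeneous form-degree |a| (working with ℂ[[y^1,…,y^{2n}]][ℏ^{−1},ℏ]]-coefficients where negative powers of ℏ occur): (i) D(∂a/∂ℏ) − ∂(Da)/∂ℏ = −[ ∂((i/ℏ)r)/∂ℏ, a ] − (i/ℏ)( c_1(r,a) − (−1)^{|a|} c_1(a,r) ); (ii) D(Ea) − E(Da) = (i/2)δa − [ (i/ℏ)Er, a ] + c_1(r,a) − (−1)^{|a|} c_1(a,r). -/

import Mathlib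

/-!  Common definitions: formal Weyl algebras, Moyal products, Weyl-bundle valued
differential forms on ℝ^{2n}, Fedosov connections, star-products on smooth functions,
multidifferential operators and Hochschild coboundaries.  -/

noncomputable section
namespace StarPaper

open scoped BigOperators

/-! ### Formal power series in y -/

/-- The fiber coefficient ring `ℂ[[y^1, …, y^N]]`. -/
abbrev Wc (N : ℕ) := MvPowerSeries (Fin N) ℂ

/-- Build a formal power series from its coefficient function. -/
def Wc.mk {N : ℕ} (f : (Fin N →₀ ℕ) → ℂ) : Wc N := f

/-- Formal partial derivative `∂/∂y^i` on `ℂ[[y]]`. -/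
def yD {N : ℕ} (i : Fin N) (a : Wc N) : Wc N :=
  Wc.mk fun β => ((β i : ℂ) + 1) * MvPowerSeries.coeff (R := ℂ) (β + Finsupp.single i 1) a

/-- Formal iterated partial derivative `∂^α` on `ℂ[[y]]`. -/
def yDM {N : ℕ} (α : Fin N →₀ ℕ) (a : Wc N) : Wc N :=
  Wc.mk fun β =>
    (∏ i : Fin N, (((β i + α i).factorial : ℂ) / ((β i).factorial : ℂ))) *
      MvPowerSeries.coeff (R := ℂ) (β + α) a

/-- Iterated derivatives along a tuple of directions. -/
def iterD {R : Type*} {N : ℕ} (D : Fin N → R → R) : {k : ℕ} → (Fin k → Fin N) → R → R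
  | 0, _, a => a
  | _ + 1, v, a => D (v 0) (iterD D (fun t => v t.succ) a)

/-- The `k`-th term of the Moyal–Weyl product for a constant matrix `π`:
`((-iℏ/2)^k/k!) Σ π^{i₁j₁}⋯π^{i_kj_k} (∂^k a/∂y^{i₁}⋯) (∂^k b/∂y^{j₁}⋯)`. -/
def moyalTerm {R : Type*} [CommRing R] [Module ℂ R] {N : ℕ}
    (D : Fin N → R → R) (π : Matrix (Fin N) (Fin N) ℂ) (k : ℕ) (a b : R) : R :=
  ((-Complex.I / 2) ^ k / (Nat.factorial k : ℂ)) •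
    ∑ i : Fin k → Fin N, ∑ j : Fin k → Fin N,
      (∏ t, π (i t) (j t)) • (iterD D i a * iterD D j b)

/-- Moyal product on formal power series `Σ_m ℏ^m F_m` (coefficients `F : ℕ → R`). -/
def moyalN {R : Type*} [CommRing R] [Module ℂ R] {N : ℕ} (D : Fin N → R → R)
    (π : Matrix (Fin N) (Fin N) ℂ) (F G : ℕ → R) : ℕ → R :=
  fun m => ∑ k ∈ Finset.range (m + 1), ∑ l ∈ Finset.range (m - k + 1),
    moyalTerm D π k (F l) (G (m - k - l))

/-- Moyal product on formal Laurent series `Σ_m ℏ^m F_m` (coefficients `F : ℤ → R`);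
the sum over contributions is finite for series bounded below in `ℏ`-degree. -/
def moyalZ {R : Type*} [CommRing R] [Module ℂ R] {N : ℕ} (D : Fin N → R → R)
    (π : Matrix (Fin N) (Fin N) ℂ) (F G : ℤ → R) : ℤ → R :=
  fun m => ∑ᶠ p : ℕ × ℤ, moyalTerm D π p.1 (F p.2) (G (m - p.1 - p.2))

/-- Moyal term for an `ℏ`-dependent matrix `π(ℏ) = π₀ + ℏπ₁`: the part of the `k`-th
Moyal term in which the product of matrix entries contributes `ℏ^d`. -/
def moyalTermH {R : Type*} [CommRing R] [Module ℂ R] {N : ℕ} (D : Fin N → R → R)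
    (π0 π1 : Matrix (Fin N) (Fin N) ℂ) (k d : ℕ) (a b : R) : R :=
  ((-Complex.I / 2) ^ k / (Nat.factorial k : ℂ)) •
    ∑ i : Fin k → Fin N, ∑ j : Fin k → Fin N,
      (∑ T ∈ Finset.univ.powerset.filter (fun T : Finset (Fin k) => T.card = d),
          (∏ t ∈ T, π1 (i t) (j t)) * ∏ t ∈ Tᶜ, π0 (i t) (j t)) •
        (iterD D i a * iterD D j b)

/-- Moyal product built from the `ℏ`-dependent matrix `π(ℏ) = π₀ + ℏπ₁`. -/
def moyalNH {R : Type*} [CommRing R] [Module ℂ R] {N : ℕ} (D : Fin N → R → R)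
    (π0 π1 : Matrix (Fin N) (Fin N) ℂ) (F G : ℕ → R) : ℕ → R :=
  fun m => ∑ k ∈ Finset.range (m + 1), ∑ d ∈ Finset.range (m - k + 1),
    ∑ l ∈ Finset.range (m - k - d + 1),
      moyalTermH D π0 π1 k d (F l) (G (m - k - d - l))

/-- The standard Poisson matrix `π` on `ℝ^{2n}` (inverse of the standard symplectic
matrix `ω`, normalized by `Σ_m ω_{jm} π^{mn} = δ_j^n`). -/
def stdPi (n : ℕ) : Matrix (Fin (2 * n)) (Fin (2 * n)) ℂ :=
  Matrix.of fun i j =>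
    if (i : ℕ) + n = (j : ℕ) then 1 else if (j : ℕ) + n = (i : ℕ) then -1 else 0

/-- The standard symplectic matrix `ω_{ij}`. -/
def stdOmega (n : ℕ) : Matrix (Fin (2 * n)) (Fin (2 * n)) ℂ := -stdPi n

/-! ### The formal Weyl algebra `W = ℂ[[y,ℏ]]` -/

/-- The formal Weyl algebra as `ℏ`-coefficient sequences. -/
abbrev Wa (N : ℕ) := ℕ → Wc N

/-- Moyal–Weyl product on `W` for a constant matrix `π`. -/
def wmulPi {N : ℕ} (π : Matrix (Fin N) (Fin N) ℂ) (a b : Wa N) : Wa N := moyalN yD π a b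

/-- Moyal–Weyl product on `W` for the standard symplectic Poisson matrix. -/
def wmul {n : ℕ} (a b : Wa (2 * n)) : Wa (2 * n) := wmulPi (stdPi n) a b

/-- The unit `1 ∈ W`. -/
def oneW (N : ℕ) : Wa N := fun m => if m = 0 then 1 else 0

/-- Scalar multiplication by a formal power series `s ∈ ℂ[[ℏ]]` (given by its
coefficients `s : ℕ → ℂ`). -/
def hsmul {N : ℕ} (s : ℕ → ℂ) (a : Wa N) : Wa N :=
  fun m => ∑ l ∈ Finset.range (m + 1), s l • a (m - l)

/-- The operator `E = -(i/2) Σ_j y^j ∂/∂y^j` on `ℂ[[y]]`. -/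
def EulW {N : ℕ} (a : Wc N) : Wc N :=
  Wc.mk fun β => -Complex.I / 2 * (∑ i : Fin N, (β i : ℂ)) * MvPowerSeries.coeff (R := ℂ) β a

/-- `E` on the Weyl algebra, acting on each `ℏ`-coefficient. -/
def EulWa {N : ℕ} (a : Wa N) : Wa N := fun m => EulW (a m)

/-- Termwise derivative `∂/∂ℏ`. -/
def hD {N : ℕ} (a : Wa N) : Wa N := fun m => (((m + 1 : ℕ) : ℂ)) • a (m + 1)

/-- Multiplication by `ℏ`. -/
def hM {N : ℕ} (a : Wa N) : Wa N := fun m => match m with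
  | 0 => 0
  | Nat.succ m' => a m'

/-- Division by `ℏ` (exact on elements divisible by `ℏ`; discards the constant term). -/
def hInv {N : ℕ} (a : Wa N) : Wa N := fun m => a (m + 1)

/-- The `ℏ`-derivative of the Moyal–Weyl product structure:
`c₁(a,b) = ∂(a⋆b)/∂ℏ − (∂a/∂ℏ)⋆b − a⋆(∂b/∂ℏ)`. -/
def c1W {n : ℕ} (a b : Wa (2 * n)) : Wa (2 * n) :=
  hD (wmul a b) - wmul (hD a) b - wmul a (hD b)

/-! ### W-valued differential forms on ℝ^{2n} -/

/-- Points of `ℝ^{2n}`. -/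
abbrev Pt (n : ℕ) := Fin (2 * n) → ℝ

/-- `W`-valued exterior forms on `ℝ^{2n}`: the component at a finite index set
`S = {j₁ < ⋯ < j_q}` is the coefficient of `dx^{j₁} ∧ ⋯ ∧ dx^{j_q}`. -/
abbrev WF (n : ℕ) := Finset (Fin (2 * n)) → Pt n → Wa (2 * n)

/-- Sign `(-1)^{#{j ∈ S, j < i}}` for inserting `dx^i` in front of `dx^S`. -/
def insSign {N : ℕ} (S : Finset (Fin N)) (i : Fin N) : ℂ :=
  (-1) ^ (S.filter fun j => j < i).card

/-- Koszul sign for merging `dx^{S₁} ∧ dx^{S₂}` into increasing order. -/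
def shuffleSign {N : ℕ} (S1 S2 : Finset (Fin N)) : ℂ :=
  (-1) ^ ((S1 ×ˢ S2).filter fun p => p.2 < p.1).card

/-- `∂/∂y^i` on the Weyl algebra. -/
def yDa {N : ℕ} (i : Fin N) (w : Wa N) : Wa N := fun m => yD i (w m)

/-- The operator `δ a = Σ_i dx^i ∧ ∂a/∂y^i`. -/
def deltaW {n : ℕ} (a : WF n) : WF n :=
  fun S x => ∑ i ∈ S, insSign S i • yDa i (a (S.erase i) x)

/-- The partial derivative `∂/∂x^i` of a `W`-valued function, taken coefficientwise. -/
def xD {n : ℕ} (i : Fin (2 * n)) (f : Pt n → Wa (2 * n)) (x : Pt n) : Wa (2 * n) :=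
  fun m => Wc.mk fun β =>
    fderiv ℝ (fun x' => MvPowerSeries.coeff (R := ℂ) β (f x' m)) x (Pi.single i 1)

/-- The exterior derivative `d a = Σ_i dx^i ∧ ∂a/∂x^i` on `W`-valued forms. -/
def extD {n : ℕ} (a : WF n) : WF n :=
  fun S x => ∑ i ∈ S, insSign S i • xD i (a (S.erase i)) x

/-- The product on `W`-valued forms: Moyal–Weyl product combined with wedge product. -/
def wMulF {n : ℕ} (a b : WF n) : WF n :=
  fun S x => ∑ S1 ∈ S.powerset, shuffleSign S1 (S \ S1) • wmul (a S1 x) (b (S \ S1) x)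

/-- Graded commutator `[r, a] = r⋆a − (−1)^{|a|} a⋆r` with a form `r` of degree 1. -/
def comm1 {n : ℕ} (r a : WF n) : WF n :=
  fun S x => wMulF r a S x - (-1 : ℂ) ^ (S.card - 1) • wMulF a r S x

/-- Graded commutator `[u, a] = u⋆a − a⋆u` with a form `u` of even degree. -/
def commE {n : ℕ} (u a : WF n) : WF n := fun S x => wMulF u a S x - wMulF a u S x

/-- The connection `D = −δ + d + (i/ℏ)[r, ·]` determined by a `W`-valued 1-form `r`. -/
def fedD {n : ℕ} (r a : WF n) : WF n :=
  fun S x => -deltaW a S x + extD a S x + Complex.I • hInv (comm1 r a S x)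

/-- A `W`-valued form has smooth coefficients. -/
def WF.Smooth {n : ℕ} (a : WF n) : Prop :=
  ∀ S m β, ContDiff ℝ (⊤ : ℕ∞) fun x => MvPowerSeries.coeff (R := ℂ) β (a S x m)

/-- A `W`-valued form is homogeneous of form-degree `q`. -/
def isForm {n : ℕ} (q : ℕ) (a : WF n) : Prop := ∀ S, S.card ≠ q → a S = 0

/-- A `W`-valued form is scalar: all coefficients are independent of the `y` variables. -/
def isScalar {n : ℕ} (a : WF n) : Prop :=
  ∀ S x m β, β ≠ 0 → MvPowerSeries.coeff (R := ℂ) β (a S x m) = 0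

/-- The constant standard symplectic 2-form `ω = (1/2) Σ ω_{ij} dx^i ∧ dx^j`. -/
def omegaF (n : ℕ) : WF n :=
  fun S _ m =>
    if m = 0 then
      MvPowerSeries.C (σ := Fin (2 * n)) (R := ℂ)
        (∑ i : Fin (2 * n), ∑ j : Fin (2 * n),
          if i < j ∧ S = {i, j} then stdOmega n i j else 0)
    else 0

/-- The curvature `Ω = ω + δr − dr − (i/ℏ) r⋆r` of the connection `−δ + d + (i/ℏ)[r,·]`. -/
def curv {n : ℕ} (r : WF n) : WF n :=
  fun S x => omegaF n S x + deltaW r S x - extD r S x - Complex.I • hInv (wMulF r r S x)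

/-- The operator `δ⁻¹`, acting as `(1/(p+q)) Σ_k y^k ι_k` on the part of `y`-degree `p`
and form-degree `q` (and as `0` for `p = q = 0`). -/
def deltaInv {n : ℕ} (a : WF n) : WF n :=
  fun S x m => Wc.mk fun β =>
    ((((β.sum fun _ e => e) + S.card : ℕ) : ℂ))⁻¹ *
      ∑ k : Fin (2 * n),
        if k ∉ S ∧ 1 ≤ β k then
          insSign S k * MvPowerSeries.coeff (R := ℂ) (β - Finsupp.single k 1) (a (insert k S) x m)
        else 0

/-! ### x-independent W-valued exterior forms (the graded algebra W⊗Λ) -/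

/-- `W`-valued exterior forms with constant coefficients. -/
abbrev WL (n : ℕ) := Finset (Fin (2 * n)) → Wa (2 * n)

/-- `δ` on `W ⊗ Λ`. -/
def deltaWL {n : ℕ} (a : WL n) : WL n :=
  fun S => ∑ i ∈ S, insSign S i • yDa i (a (S.erase i))

/-- Product (Moyal combined with wedge) on `W ⊗ Λ`. -/
def wMulL {n : ℕ} (a b : WL n) : WL n :=
  fun S => ∑ S1 ∈ S.powerset, shuffleSign S1 (S \ S1) • wmul (a S1) (b (S \ S1))

/-- `E` on `W ⊗ Λ`, acting on the `W`-coefficients. -/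
def EulL {n : ℕ} (a : WL n) : WL n := fun S => EulWa (a S)

/-- The `W`-valued 1-form `Σ_{i,j} ω_{ij} y^i dx^j`. -/
def oydxW (n : ℕ) : WL n :=
  fun S m =>
    if m = 0 then
      ∑ j : Fin (2 * n),
        (if S = {j} then ∑ i : Fin (2 * n), stdOmega n i j • MvPowerSeries.X i else 0)
    else 0

/-- The 1-form `K₀ = −(Er − iℏ ∂r/∂ℏ + i r + (i/2) Σ ω_{ij} y^i dx^j)`. -/
def K0 {n : ℕ} (r : WF n) : WF n :=
  fun S x =>
    -(EulWa (r S x) - Complex.I • hM (hD (r S x)) + Complex.I • r S x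
      + (Complex.I / 2) • oydxW n S)

/-- The quantum Liouville-type operator `ρ(u) = (ℏ/i) ∂u/∂ℏ + E u`. -/
def rhoW {n : ℕ} (u : WF n) : WF n :=
  fun S x m => (-Complex.I * (m : ℂ)) • u S x m + EulW (u S x m)

/-- `c₁` extended to `W`-valued forms. -/
def c1F {n : ℕ} (a b : WF n) : WF n :=
  fun S x => ∑ S1 ∈ S.powerset, shuffleSign S1 (S \ S1) • c1W (a S1 x) (b (S \ S1) x)

/-! ### The Laurent (ℏ-inverted) Weyl algebra and forms -/

/-- The extended Weyl algebra `W⁺ = ℂ[[y]][ℏ⁻¹,ℏ]]` as `ℏ`-coefficient sequences. -/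
abbrev WaZ (N : ℕ) := ℤ → Wc N

/-- Moyal–Weyl product on `W⁺` for a constant matrix `π`. -/
def wmulZPi {N : ℕ} (π : Matrix (Fin N) (Fin N) ℂ) (a b : WaZ N) : WaZ N := moyalZ yD π a b

/-- Moyal–Weyl product on `W⁺` for the standard symplectic Poisson matrix. -/
def wmulZ {n : ℕ} (a b : WaZ (2 * n)) : WaZ (2 * n) := wmulZPi (stdPi n) a b

/-- `W⁺`-valued exterior forms on `ℝ^{2n}`. -/
abbrev WFZ (n : ℕ) := Finset (Fin (2 * n)) → Pt n → WaZ (2 * n)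

/-- `∂/∂y^i` on `W⁺`. -/
def yDaZ {N : ℕ} (i : Fin N) (w : WaZ N) : WaZ N := fun m => yD i (w m)

/-- `δ` on `W⁺`-valued forms. -/
def deltaZ {n : ℕ} (a : WFZ n) : WFZ n :=
  fun S x => ∑ i ∈ S, insSign S i • yDaZ i (a (S.erase i) x)

/-- `∂/∂x^i` on `W⁺`-valued functions. -/
def xDZ {n : ℕ} (i : Fin (2 * n)) (f : Pt n → WaZ (2 * n)) (x : Pt n) : WaZ (2 * n) :=
  fun m => Wc.mk fun β =>
    fderiv ℝ (fun x' => MvPowerSeries.coeff (R := ℂ) β (f x' m)) x (Pi.single i 1)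

/-- Exterior derivative on `W⁺`-valued forms. -/
def extDZ {n : ℕ} (a : WFZ n) : WFZ n :=
  fun S x => ∑ i ∈ S, insSign S i • xDZ i (a (S.erase i)) x

/-- Product on `W⁺`-valued forms. -/
def wMulZF {n : ℕ} (a b : WFZ n) : WFZ n :=
  fun S x => ∑ S1 ∈ S.powerset, shuffleSign S1 (S \ S1) • wmulZ (a S1 x) (b (S \ S1) x)

/-- Graded commutator with a 1-form, on `W⁺`-valued forms. -/
def comm1Z {n : ℕ} (r a : WFZ n) : WFZ n :=
  fun S x => wMulZF r a S x - (-1 : ℂ) ^ (S.card - 1) • wMulZF a r S x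

/-- Division by `ℏ` on `W⁺` (exact: a shift of Laurent coefficients). -/
def shiftZ {N : ℕ} (a : WaZ N) : WaZ N := fun m => a (m + 1)

/-- The connection `D = −δ + d + (i/ℏ)[r,·]` on `W⁺`-valued forms. -/
def fedDZ {n : ℕ} (r a : WFZ n) : WFZ n :=
  fun S x => -deltaZ a S x + extDZ a S x + Complex.I • shiftZ (comm1Z r a S x)

/-- Termwise `∂/∂ℏ` on `W⁺`. -/
def hDZ {N : ℕ} (a : WaZ N) : WaZ N := fun m => ((m + 1 : ℤ) : ℂ) • a (m + 1)

/-- `∂/∂ℏ` on `W⁺`-valued forms. -/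
def hDZF {n : ℕ} (a : WFZ n) : WFZ n := fun S x => hDZ (a S x)

/-- `E` on `W⁺`. -/
def EulZ {N : ℕ} (a : WaZ N) : WaZ N := fun m => EulW (a m)

/-- `E` on `W⁺`-valued forms. -/
def EulZF {n : ℕ} (a : WFZ n) : WFZ n := fun S x => EulZ (a S x)

/-- `c₁` on `W⁺`. -/
def c1Za {n : ℕ} (a b : WaZ (2 * n)) : WaZ (2 * n) :=
  hDZ (wmulZ a b) - wmulZ (hDZ a) b - wmulZ a (hDZ b)

/-- `c₁` on `W⁺`-valued forms. -/
def c1ZF {n : ℕ} (a b : WFZ n) : WFZ n :=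
  fun S x => ∑ S1 ∈ S.powerset, shuffleSign S1 (S \ S1) • c1Za (a S1 x) (b (S \ S1) x)

/-- Smoothness of the coefficients of a `W⁺`-valued form. -/
def WFZ.Smooth {n : ℕ} (a : WFZ n) : Prop :=
  ∀ S m β, ContDiff ℝ (⊤ : ℕ∞) fun x => MvPowerSeries.coeff (R := ℂ) β (a S x m)

/-- Homogeneity of form-degree `q` for `W⁺`-valued forms. -/
def isFormZ {n : ℕ} (q : ℕ) (a : WFZ n) : Prop := ∀ S, S.card ≠ q → a S = 0

/-- A `W⁺`-valued form has power series coefficients (no negative powers of `ℏ`). -/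
def PSupp {n : ℕ} (a : WFZ n) : Prop := ∀ S x m, m < 0 → a S x m = 0

/-- A Laurent series is bounded below in `ℏ`-degree. -/
def BddZ {α : Type*} [Zero α] (f : ℤ → α) : Prop :=
  ∃ N : ℕ, ∀ m : ℤ, m < -(N : ℤ) → f m = 0

/-! ### Smooth functions and star-products on ℝ^N -/

/-- Complex-valued functions on `ℝ^N`. -/
abbrev SmFn (N : ℕ) := (Fin N → ℝ) → ℂ

/-- Partial derivative `∂/∂x^i` of a (smooth) function. -/
def xDf {N : ℕ} (i : Fin N) (f : SmFn N) : SmFn N := fun x => fderiv ℝ f x (Pi.single i 1)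

/-- Iterated partial derivative `∂^α`. -/
def xDfM {N : ℕ} (α : Fin N →₀ ℕ) (f : SmFn N) : SmFn N :=
  (List.finRange N).foldr (fun i g => (xDf i)^[α i] g) f

/-- Formal power series with function coefficients: `C^∞(ℝ^N,ℂ)[[ℏ]]`. -/
abbrev SmSer (N : ℕ) := ℕ → SmFn N

/-- Formal Laurent series with function coefficients: `C^∞(ℝ^N,ℂ)[ℏ⁻¹,ℏ]]`. -/
abbrev SmLau (N : ℕ) := ℤ → SmFn N

/-- All coefficients of a series are smooth. -/
def SmSer.Smooth {N : ℕ} (F : SmSer N) : Prop := ∀ m, ContDiff ℝ (⊤ : ℕ∞) (F m)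

/-- All coefficients of a Laurent series are smooth. -/
def SmLau.Smooth {N : ℕ} (F : SmLau N) : Prop := ∀ m, ContDiff ℝ (⊤ : ℕ∞) (F m)

/-- The Moyal star-product on `C^∞(ℝ^N,ℂ)[[ℏ]]` for a constant matrix `π`. -/
def fMul {N : ℕ} (π : Matrix (Fin N) (Fin N) ℂ) (F G : SmSer N) : SmSer N :=
  moyalN xDf π F G

/-- The Moyal star-product on Laurent series. -/
def fMulZ {N : ℕ} (π : Matrix (Fin N) (Fin N) ℂ) (F G : SmLau N) : SmLau N :=
  moyalZ xDf π F G

/-- The Moyal star-product with `ℏ`-dependent matrix `π(ℏ) = π₀ + ℏπ₁`. -/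
def fMulH {N : ℕ} (π0 π1 : Matrix (Fin N) (Fin N) ℂ) (F G : SmSer N) : SmSer N :=
  moyalNH xDf π0 π1 F G

/-- The constant series `1`. -/
def oneSer (N : ℕ) : SmSer N := fun m => if m = 0 then (fun _ => 1) else 0

/-- The standard Poisson bracket `{f,g} = Σ π^{ij} ∂_i f ∂_j g` on `ℝ^{2n}`. -/
def pb (n : ℕ) (f g : SmFn (2 * n)) : SmFn (2 * n) :=
  fun x => ∑ i, ∑ j, stdPi n i j * xDf i f x * xDf j g x

/-! ### Multidifferential operators and star-products -/

/-- A `k`-multidifferential operator on `C^∞(ℝ^N,ℂ)`: a finite sum of terms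
`u(x) (∂^{α₁}f₁)⋯(∂^{α_k}f_k)`, recorded by its finitely many coefficients. -/
abbrev MDOp (N k : ℕ) := (Fin k → (Fin N →₀ ℕ)) →₀ SmFn N

/-- Action of a multidifferential operator. -/
def MDOp.app {N k : ℕ} (c : MDOp N k) (f : Fin k → SmFn N) : SmFn N :=
  fun x => c.sum fun T u => u x * ∏ t, xDfM (T t) (f t) x

/-- A multidifferential operator has smooth coefficients. -/
def MDOp.Smooth {N k : ℕ} (c : MDOp N k) : Prop := ∀ T, ContDiff ℝ (⊤ : ℕ∞) (c T)

/-- A family of bidifferential operators `C_k`, extended `ℂ[[ℏ]]`-bilinearly: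
`F ⋆ G = Σ ℏ^{k+l+l'} C_k(F_l, G_{l'})`. -/
def starN {N : ℕ} (C : ℕ → MDOp N 2) (F G : SmSer N) : SmSer N :=
  fun m => ∑ k ∈ Finset.range (m + 1), ∑ l ∈ Finset.range (m - k + 1),
    MDOp.app (C k) ![F l, G (m - k - l)]

/-- The `ℂ[ℏ⁻¹,ℏ]]`-bilinear extension of a star-product to Laurent series. -/
def starZ {N : ℕ} (C : ℕ → MDOp N 2) (F G : SmLau N) : SmLau N :=
  fun m => ∑ᶠ p : ℕ × ℤ, MDOp.app (C p.1) ![F p.2, G (m - p.1 - p.2)]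

/-- Action of a Laurent cochain `c = Σ_l ℏ^l c_l` of multidifferential operators
on a `k`-tuple of Laurent series. -/
def lac {N k : ℕ} (cc : ℤ → MDOp N k) (u : Fin k → SmLau N) : SmLau N :=
  fun m => ∑ᶠ v : Fin k → ℤ, MDOp.app (cc (m - ∑ t, v t)) fun t => u t (v t)

/-- A differential star-product on `ℝ^{2n}` quantizing the standard symplectic
structure: `f ⋆ g = Σ ℏ^k C_k(f,g)` with `C_k` bidifferential, `C₀(f,g) = fg`,
`1` a unit, `⋆` associative, and `C₁(f,g) − C₁(g,f) = −i{f,g}`. -/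
structure DiffStar (n : ℕ) where
  C : ℕ → MDOp (2 * n) 2
  smooth : ∀ k, MDOp.Smooth (C k)
  C0 : ∀ f g : SmFn (2 * n), MDOp.app (C 0) ![f, g] = f * g
  unit_left : ∀ F : SmSer (2 * n), SmSer.Smooth F → starN C (oneSer (2 * n)) F = F
  unit_right : ∀ F : SmSer (2 * n), SmSer.Smooth F → starN C F (oneSer (2 * n)) = F
  assoc : ∀ F G H : SmSer (2 * n), SmSer.Smooth F → SmSer.Smooth G → SmSer.Smooth H →
    starN C (starN C F G) H = starN C F (starN C G H)
  C1skew : ∀ f g : SmFn (2 * n), ContDiff ℝ (⊤ : ℕ∞) f → ContDiff ℝ (⊤ : ℕ∞) g →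
    MDOp.app (C 1) ![f, g] - MDOp.app (C 1) ![g, f] = fun x => -Complex.I * pb n f g x

/-! ### Hochschild coboundary -/

/-- The Hochschild coboundary `b̃` of a `k`-cochain with respect to a product `mul`. -/
def hoch {A : Type*} [AddCommGroup A] (mul : A → A → A) {k : ℕ}
    (c : (Fin k → A) → A) : (Fin (k + 1) → A) → A :=
  fun u =>
    mul (u 0) (c fun t => u t.succ)
      + ∑ i : Fin k, ((-1 : ℤ) ^ ((i : ℕ) + 1)) •
          c (fun j => if (j : ℕ) < (i : ℕ) then u j.castSucc
            else if (j : ℕ) = (i : ℕ) then mul (u j.castSucc) (u j.succ)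
            else u j.succ)
      + ((-1 : ℤ) ^ (k + 1)) • mul (c fun t => u t.castSucc) (u (Fin.last k))

/-! ### Formal differential operators on ℂ[[y]] -/

/-- A formal `k`-differential operator on `ℂ[[y^1,…,y^N]]`:
`c(a₁,…,a_k) = Σ_T u^T (∂^{T 1}a₁)⋯(∂^{T k}a_k)` with coefficients
`u^T ∈ ℂ[[y]]` such that for each degree `d` only finitely many tuples `T` have a
coefficient containing a nonzero monomial of degree `≤ d`. -/
structure FDOp (N k : ℕ) where
  u : (Fin k → (Fin N →₀ ℕ)) → Wc N
  fin : ∀ d : ℕ,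
    {T : Fin k → (Fin N →₀ ℕ) | ∃ β : Fin N →₀ ℕ,
      (β.sum fun _ e => e) ≤ d ∧ MvPowerSeries.coeff (R := ℂ) β (u T) ≠ 0}.Finite

/-- Action of a formal differential operator (the defining sum converges in the
`y`-adic topology; each coefficient receives only finitely many contributions). -/
def FDOp.app {N k : ℕ} (P : FDOp N k) (a : Fin k → Wc N) : Wc N :=
  Wc.mk fun β => ∑ᶠ T : Fin k → (Fin N →₀ ℕ),
    MvPowerSeries.coeff (R := ℂ) β (P.u T * ∏ t, yDM (T t) (a t))

/-- Action of a Laurent cochain `c = Σ_l ℏ^l c_l` of formal differential operators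
on a `k`-tuple of elements of `W⁺`. -/
def flac {N k : ℕ} (cc : ℤ → FDOp N k) (a : Fin k → WaZ N) : WaZ N :=
  fun m => ∑ᶠ v : Fin k → ℤ, FDOp.app (cc (m - ∑ t, v t)) fun t => a t (v t)

/-! ### Flat sections, Taylor series and quantum exponential -/

/-- Fiberwise Taylor series of a smooth function at `x`. -/
def taylorW {N : ℕ} (f : SmFn N) (x : Fin N → ℝ) : Wc N :=
  Wc.mk fun β => (∏ i : Fin N, ((β i).factorial : ℂ))⁻¹ * xDfM β f x

/-- Sections of the Weyl bundle over `ℝ^{2n}` (W-valued 0-forms). -/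
abbrev Sect (n : ℕ) := Pt n → Wa (2 * n)

/-- The fiberwise Taylor lift of a series of smooth functions. -/
def taylorS {n : ℕ} (F : SmSer (2 * n)) : Sect n := fun x m => taylorW (F m) x

/-- A section has smooth coefficients. -/
def Sect.Smooth {n : ℕ} (u : Sect n) : Prop :=
  ∀ m β, ContDiff ℝ (⊤ : ℕ∞) fun x => MvPowerSeries.coeff (R := ℂ) β (u x m)

/-- A section is flat for `D = −δ + d`: its component equations read
`∂u/∂x^i = ∂u/∂y^i` for all `i`. -/
def Sect.Flat {n : ℕ} (u : Sect n) : Prop :=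
  ∀ (i : Fin (2 * n)) (x : Pt n), xD i u x = yDa i (u x)

/-- The symbol map `σ(u) = u|_{y=0}`. -/
def sigma {n : ℕ} (u : Sect n) : SmSer (2 * n) :=
  fun m x => MvPowerSeries.coeff (R := ℂ) 0 (u x m)

/-- Fiberwise Moyal–Weyl product of sections. -/
def wmulS {n : ℕ} (u v : Sect n) : Sect n := fun x => wmul (u x) (v x)

/-! ### Vector fields and Liouville-type operators -/

/-- Action of a vector field `X = Σ_j X^j ∂_j` on a function. -/
def XAct {N : ℕ} (X : Fin N → SmFn N) (f : SmFn N) : SmFn N :=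
  fun x => ∑ j, X j x * xDf j f x

/-- A smooth function viewed as a series concentrated in `ℏ`-degree `0`. -/
def embS {N : ℕ} (f : SmFn N) : SmSer N := fun m => if m = 0 then f else 0

/-- The Hochschild coboundary `b̃X(f,g) = f⋆(Xg) − X(f⋆g) + (Xf)⋆g` of a vector
field, for the Moyal star-product with constant matrix `π`. -/
def bXMoyal {N : ℕ} (π : Matrix (Fin N) (Fin N) ℂ) (X : Fin N → SmFn N)
    (f g : SmFn N) : SmSer N :=
  fMul π (embS f) (embS (XAct X g)) - (fun m => XAct X (fMul π (embS f) (embS g) m))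
    + fMul π (embS (XAct X f)) (embS g)

/-- The operator `ℏ ∂_ℏ + X` on `C^∞(ℝ^N,ℂ)[[ℏ]]`. -/
def LOp {N : ℕ} (X : Fin N → SmFn N) (F : SmSer N) : SmSer N :=
  fun m x => (m : ℂ) * F m x + XAct X (F m) x

/-- The derivative of a star-product with respect to `ℏ`:
`c(f,g) = Σ_{k≥1} k ℏ^{k-1} C_k(f,g)`, extended `ℂ[[ℏ]]`-bilinearly. -/
def dStar {N : ℕ} (C : ℕ → MDOp N 2) (F G : SmSer N) : SmSer N :=
  fun m => ∑ k ∈ Finset.Icc 1 (m + 1), (k : ℂ) •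
    ∑ l ∈ Finset.range (m + 1 - k + 1), MDOp.app (C k) ![F l, G (m + 1 - k - l)]

end StarPaper

/-!
Both identities are computed fibrewise after expanding `D`. The operators `∂/∂ℏ` and `E` commute
with `d`, and `[E, δ] = (i/2) δ`. The only real input is how they interact with the Moyal
product `a ⋆ b = Σ ℏ^k B_k(a, b)`: since `B_k` lowers the `y`-degree by `2k`, both `ℏ ∂/∂ℏ` and `E`
are derivations of `⋆` up to the term `Σ k ℏ^k B_k(a, b)` (with factor `1`, resp. `i`), and that
term is `ℏ c₁(a, b)`. The rest is graded Leibniz bookkeeping, in which the homogeneity of `r` and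
`a` turns the sign `(-1)^{|S|-1}` of the commutator into `(-1)^{|a|}`.
-/

namespace StarPaper

section PowerSeries

variable {N : ℕ}

lemma coeff_mk (f : (Fin N →₀ ℕ) → ℂ) (β : Fin N →₀ ℕ) :
    MvPowerSeries.coeff (R := ℂ) β (Wc.mk f) = f β := rfl

def yDLin (i : Fin N) : Wc N →ₗ[ℂ] Wc N where
  toFun := yD i
  map_add' u v := by ext β; simp [yD, coeff_mk, mul_add]
  map_smul' c u := by ext β; simp [yD, coeff_mk]; ring

def EulWLin : Wc N →ₗ[ℂ] Wc N where
  toFun := EulW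
  map_add' u v := by ext β; simp [EulW, coeff_mk, mul_add]
  map_smul' c u := by ext β; simp [EulW, coeff_mk]; ring

lemma EulW_zero : EulW (0 : Wc N) = 0 := map_zero EulWLin

lemma EulW_yD (i : Fin N) (u : Wc N) :
    EulW (yD i u) = yD i (EulW u) + (Complex.I / 2) • yD i u := by
  ext β
  simp [EulW, yD, coeff_mk, Finset.sum_add_distrib, Finsupp.single_apply]
  ring

lemma EulW_mul (u v : Wc N) : EulW (u * v) = EulW u * v + u * EulW v := by
  ext β
  simp only [map_add, MvPowerSeries.coeff_mul, EulW, coeff_mk]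
  rw [Finset.mul_sum, ← Finset.sum_add_distrib]
  refine Finset.sum_congr rfl fun p hp => ?_
  rw [Finset.HasAntidiagonal.mem_antidiagonal] at hp
  subst hp
  simp only [Finsupp.coe_add, Pi.add_apply, Nat.cast_add, Finset.sum_add_distrib]
  ring

def iterYDLin : {k : ℕ} → (Fin k → Fin N) → Wc N →ₗ[ℂ] Wc N
  | 0, _ => LinearMap.id
  | _ + 1, v => yDLin (v 0) ∘ₗ iterYDLin fun t => v t.succ

lemma iterYDLin_apply {k : ℕ} (v : Fin k → Fin N) (a : Wc N) :
    iterYDLin v a = iterD yD v a := by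
  induction k with
  | zero => rfl
  | succ k ih => simp [iterYDLin, iterD, ih, yDLin]

lemma EulW_iterD {k : ℕ} (v : Fin k → Fin N) (a : Wc N) :
    EulW (iterD yD v a) = iterD yD v (EulW a) + ((Complex.I / 2) * k) • iterD yD v a := by
  induction k with
  | zero => simp [iterD]
  | succ k ih =>
    have hy : ∀ i, yD i = ⇑(yDLin (N := N) i) := fun _ => rfl
    simp only [iterD]
    rw [EulW_yD, ih]
    simp only [hy, map_add, map_smul]
    push_cast
    module

variable (π : Matrix (Fin N) (Fin N) ℂ) (k : ℕ)

def moyalTermBilin : Wc N →ₗ[ℂ] Wc N →ₗ[ℂ] Wc N :=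
  ((-Complex.I / 2) ^ k / (Nat.factorial k : ℂ)) •
    ∑ i : Fin k → Fin N, ∑ j : Fin k → Fin N,
      (∏ t, π (i t) (j t)) • (LinearMap.mul ℂ (Wc N)).compl₁₂ (iterYDLin i) (iterYDLin j)

lemma moyalTermBilin_apply (a b : Wc N) : moyalTermBilin π k a b = moyalTerm yD π k a b := by
  simp [moyalTermBilin, moyalTerm, LinearMap.sum_apply, iterYDLin_apply]

lemma EulW_moyalTerm (a b : Wc N) :
    EulW (moyalTerm yD π k a b)
      = moyalTerm yD π k (EulW a) b + moyalTerm yD π k a (EulW b)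
        + (Complex.I * k) • moyalTerm yD π k a b := by
  have hE : EulW = ⇑(EulWLin (N := N)) := rfl
  simp only [moyalTerm, hE, map_smul, map_sum, ← smul_add, ← Finset.sum_add_distrib,
    Finset.smul_sum]
  refine Finset.sum_congr rfl fun i _ => Finset.sum_congr rfl fun j _ => ?_
  rw [← hE, EulW_mul, EulW_iterD, EulW_iterD]
  simp only [add_mul, mul_add, smul_mul_assoc, mul_smul_comm]
  module

end PowerSeries

section Laurent

variable {N : ℕ}

def VanishesBelow (c : ℤ) (F : WaZ N) : Prop := ∀ m < c, F m = 0

namespace VanishesBelow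

variable {c : ℤ} {F G : WaZ N}

lemma sub (hF : VanishesBelow c F) (hG : VanishesBelow c G) : VanishesBelow c (F - G) :=
  fun m hm => by simp [hF m hm, hG m hm]

lemma smul (d : ℂ) (h : VanishesBelow c F) : VanishesBelow c (d • F) :=
  fun m hm => by simp [h m hm]

lemma shiftZ (h : VanishesBelow c F) : VanishesBelow (c - 1) (shiftZ F) :=
  fun m hm => h (m + 1) (by omega)

lemma hDZ (h : VanishesBelow c F) : VanishesBelow (c - 1) (hDZ F) :=
  fun m hm => by simp [StarPaper.hDZ, h (m + 1) (by omega)]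

lemma EulZ (h : VanishesBelow c F) : VanishesBelow c (EulZ F) :=
  fun m hm => by simp [StarPaper.EulZ, h m hm, EulW_zero]

end VanishesBelow

def hDZLin : WaZ N →ₗ[ℂ] WaZ N where
  toFun := hDZ
  map_add' _ _ := funext fun _ => smul_add _ _ _
  map_smul' c u := funext fun m => smul_comm ((m + 1 : ℤ) : ℂ) c (u (m + 1))

def EulZLin : WaZ N →ₗ[ℂ] WaZ N where
  toFun := EulZ
  map_add' _ _ := funext fun _ => map_add EulWLin _ _
  map_smul' _ _ := funext fun _ => map_smul EulWLin _ _

def shiftZLin : WaZ N →ₗ[ℂ] WaZ N where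
  toFun := shiftZ
  map_add' _ _ := rfl
  map_smul' _ _ := rfl

lemma hDZ_add (u v : WaZ N) : hDZ (u + v) = hDZ u + hDZ v := map_add hDZLin u v
lemma hDZ_sub (u v : WaZ N) : hDZ (u - v) = hDZ u - hDZ v := map_sub hDZLin u v
lemma hDZ_neg (u : WaZ N) : hDZ (-u) = -hDZ u := map_neg hDZLin u
lemma hDZ_smul (c : ℂ) (u : WaZ N) : hDZ (c • u) = c • hDZ u := map_smul hDZLin c u
lemma hDZ_zero : hDZ (0 : WaZ N) = 0 := map_zero hDZLin
lemma EulZ_add (u v : WaZ N) : EulZ (u + v) = EulZ u + EulZ v := map_add EulZLin u v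
lemma EulZ_sub (u v : WaZ N) : EulZ (u - v) = EulZ u - EulZ v := map_sub EulZLin u v
lemma EulZ_neg (u : WaZ N) : EulZ (-u) = -EulZ u := map_neg EulZLin u
lemma EulZ_smul (c : ℂ) (u : WaZ N) : EulZ (c • u) = c • EulZ u := map_smul EulZLin c u
lemma shiftZ_add (u v : WaZ N) : shiftZ (u + v) = shiftZ u + shiftZ v := rfl
lemma shiftZ_sub (u v : WaZ N) : shiftZ (u - v) = shiftZ u - shiftZ v := rfl
lemma shiftZ_smul (c : ℂ) (u : WaZ N) : shiftZ (c • u) = c • shiftZ u := rfl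

lemma EulZ_shiftZ (u : WaZ N) : EulZ (shiftZ u) = shiftZ (EulZ u) := rfl

lemma hDZ_shiftZ (u : WaZ N) : hDZ (shiftZ u) = shiftZ (hDZ u) - shiftZ (shiftZ u) := by
  funext m
  simp only [hDZ, shiftZ, Pi.sub_apply]
  rw [show ((m + 1 + 1 : ℤ) : ℂ) = ((m + 1 : ℤ) : ℂ) + 1 by push_cast; ring, add_smul, one_smul,
    add_sub_cancel_right]

/-- The operator `ℏ ∂/∂ℏ`. -/
def hDegZ (F : WaZ N) : WaZ N := fun m => (m : ℂ) • F m

lemma hDZ_eq_shiftZ_hDegZ (F : WaZ N) : hDZ F = shiftZ (hDegZ F) := rfl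

lemma VanishesBelow.hDegZ {c : ℤ} {F : WaZ N} (h : VanishesBelow c F) :
    VanishesBelow c (hDegZ F) :=
  fun m hm => by simp [StarPaper.hDegZ, h m hm]

end Laurent

section LaurentMoyal

variable {N : ℕ}

lemma moyalTerm_zero_left (π : Matrix (Fin N) (Fin N) ℂ) (k : ℕ) (b : Wc N) :
    moyalTerm yD π k 0 b = 0 := by
  rw [← moyalTermBilin_apply, LinearMap.map_zero₂]

lemma moyalTerm_zero_right (π : Matrix (Fin N) (Fin N) ℂ) (k : ℕ) (a : Wc N) :
    moyalTerm yD π k a 0 = 0 := by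
  rw [← moyalTermBilin_apply, map_zero]

/-- The lattice points `(k, l)` that can contribute to the coefficient of `ℏ^m` in
`Σ_{k,l} ℏ^k B_k(F_l, G_{m-k-l})` when `F`, `G` vanish below `cF`, `cG`. -/
def moyalBox (cF cG m : ℤ) : Finset (ℕ × ℤ) :=
  Finset.range ((m - cF - cG).toNat + 1) ×ˢ Finset.Icc cF (m - cG)

lemma finsum_eq_sum_moyalBox {Φ : ℕ × ℤ → Wc N → Wc N → Wc N}
    (hΦl : ∀ p b, Φ p 0 b = 0) (hΦr : ∀ p a, Φ p a 0 = 0) {F G : WaZ N} {cF cG : ℤ}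
    (hF : VanishesBelow cF F) (hG : VanishesBelow cG G) (m : ℤ) :
    ∑ᶠ p : ℕ × ℤ, Φ p (F p.2) (G (m - p.1 - p.2))
      = ∑ p ∈ moyalBox cF cG m, Φ p (F p.2) (G (m - p.1 - p.2)) := by
  refine finsum_eq_finsetSum_of_support_subset _ fun p hp => ?_
  rw [Function.mem_support] at hp
  have h1 : cF ≤ p.2 := by
    by_contra h
    exact hp (by rw [hF p.2 (by omega), hΦl])
  have h2 : cG ≤ m - p.1 - p.2 := by
    by_contra h
    exact hp (by rw [hG _ (by omega), hΦr])
  simp only [moyalBox, Finset.coe_product, Set.mem_prod, Finset.mem_coe, Finset.mem_range,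
    Finset.mem_Icc]
  omega

variable (π : Matrix (Fin N) (Fin N) ℂ)

/-- `Σ_k k ℏ^k B_k(F, G)`: the Moyal product with its `k`-th term weighted by `k`. -/
def moyalWeightZ (F G : WaZ N) : WaZ N :=
  fun m => ∑ᶠ p : ℕ × ℤ, (p.1 : ℂ) • moyalTerm yD π p.1 (F p.2) (G (m - p.1 - p.2))

variable {π} {F G : WaZ N} {cF cG : ℤ}

lemma wmulZPi_apply_eq_sum (hF : VanishesBelow cF F) (hG : VanishesBelow cG G) (m : ℤ) :
    wmulZPi π F G m
      = ∑ p ∈ moyalBox cF cG m, moyalTerm yD π p.1 (F p.2) (G (m - p.1 - p.2)) :=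
  finsum_eq_sum_moyalBox (fun p => moyalTerm_zero_left π p.1)
    (fun p => moyalTerm_zero_right π p.1) hF hG m

lemma moyalWeightZ_apply_eq_sum (hF : VanishesBelow cF F) (hG : VanishesBelow cG G) (m : ℤ) :
    moyalWeightZ π F G m
      = ∑ p ∈ moyalBox cF cG m, (p.1 : ℂ) • moyalTerm yD π p.1 (F p.2) (G (m - p.1 - p.2)) :=
  finsum_eq_sum_moyalBox (Φ := fun p a b => (p.1 : ℂ) • moyalTerm yD π p.1 a b)
    (fun p b => by rw [moyalTerm_zero_left, smul_zero])
    (fun p a => by rw [moyalTerm_zero_right, smul_zero]) hF hG m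

variable (π F G)

lemma wmulZPi_shiftZ_left : wmulZPi π (shiftZ F) G = shiftZ (wmulZPi π F G) := by
  funext m
  refine finsum_eq_of_bijective (fun p : ℕ × ℤ => (p.1, p.2 + 1))
    ⟨fun p q h => ?_, fun p => ⟨(p.1, p.2 - 1), by simp⟩⟩ fun p => ?_
  · simp only [Prod.mk.injEq] at h
    exact Prod.ext h.1 (by omega)
  · simp only [shiftZ]
    congr 2
    ring

lemma wmulZPi_shiftZ_right : wmulZPi π F (shiftZ G) = shiftZ (wmulZPi π F G) := by
  funext m
  refine finsum_congr fun p => ?_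
  simp only [shiftZ]
  congr 2
  ring

lemma wmulZPi_smul_left (c : ℂ) : wmulZPi π (c • F) G = c • wmulZPi π F G := by
  funext m
  refine (finsum_congr fun p => ?_).trans (smul_finsum c _).symm
  rw [← moyalTermBilin_apply, Pi.smul_apply, LinearMap.map_smul₂, moyalTermBilin_apply]

lemma wmulZPi_smul_right (c : ℂ) : wmulZPi π F (c • G) = c • wmulZPi π F G := by
  funext m
  refine (finsum_congr fun p => ?_).trans (smul_finsum c _).symm
  rw [← moyalTermBilin_apply, Pi.smul_apply, map_smul, moyalTermBilin_apply]

variable {π F G}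

lemma wmulZPi_sub_left {F' : WaZ N} (hF : VanishesBelow cF F) (hF' : VanishesBelow cF F')
    (hG : VanishesBelow cG G) : wmulZPi π (F - F') G = wmulZPi π F G - wmulZPi π F' G := by
  funext m
  rw [Pi.sub_apply, wmulZPi_apply_eq_sum (hF.sub hF') hG, wmulZPi_apply_eq_sum hF hG,
    wmulZPi_apply_eq_sum hF' hG, ← Finset.sum_sub_distrib]
  refine Finset.sum_congr rfl fun p _ => ?_
  simp only [← moyalTermBilin_apply, Pi.sub_apply, LinearMap.map_sub₂]

lemma wmulZPi_sub_right {G' : WaZ N} (hF : VanishesBelow cF F) (hG : VanishesBelow cG G)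
    (hG' : VanishesBelow cG G') : wmulZPi π F (G - G') = wmulZPi π F G - wmulZPi π F G' := by
  funext m
  rw [Pi.sub_apply, wmulZPi_apply_eq_sum hF (hG.sub hG'), wmulZPi_apply_eq_sum hF hG,
    wmulZPi_apply_eq_sum hF hG', ← Finset.sum_sub_distrib]
  refine Finset.sum_congr rfl fun p _ => ?_
  simp only [← moyalTermBilin_apply, Pi.sub_apply, map_sub]

lemma hDegZ_wmulZPi (hF : VanishesBelow cF F) (hG : VanishesBelow cG G) :
    hDegZ (wmulZPi π F G)
      = wmulZPi π (hDegZ F) G + wmulZPi π F (hDegZ G) + moyalWeightZ π F G := by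
  funext m
  rw [Pi.add_apply, Pi.add_apply, hDegZ, wmulZPi_apply_eq_sum hF hG,
    wmulZPi_apply_eq_sum hF.hDegZ hG, wmulZPi_apply_eq_sum hF hG.hDegZ,
    moyalWeightZ_apply_eq_sum hF hG, Finset.smul_sum, ← Finset.sum_add_distrib,
    ← Finset.sum_add_distrib]
  refine Finset.sum_congr rfl fun p _ => ?_
  simp only [hDegZ, ← moyalTermBilin_apply, map_smul, LinearMap.smul_apply]
  push_cast
  module

lemma EulZ_wmulZPi (hF : VanishesBelow cF F) (hG : VanishesBelow cG G) :
    EulZ (wmulZPi π F G)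
      = wmulZPi π (EulZ F) G + wmulZPi π F (EulZ G) + Complex.I • moyalWeightZ π F G := by
  funext m
  rw [Pi.add_apply, Pi.add_apply, Pi.smul_apply, EulZ, wmulZPi_apply_eq_sum hF hG,
    wmulZPi_apply_eq_sum hF.EulZ hG, wmulZPi_apply_eq_sum hF hG.EulZ,
    moyalWeightZ_apply_eq_sum hF hG, Finset.smul_sum, ← Finset.sum_add_distrib,
    ← Finset.sum_add_distrib, show EulW = ⇑(EulWLin (N := N)) from rfl, map_sum]
  refine Finset.sum_congr rfl fun p _ => ?_
  rw [← smul_assoc, smul_eq_mul]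
  exact EulW_moyalTerm π p.1 _ _

lemma hDZ_wmulZPi (hF : VanishesBelow cF F) (hG : VanishesBelow cG G) :
    hDZ (wmulZPi π F G)
      = wmulZPi π (hDZ F) G + wmulZPi π F (hDZ G) + shiftZ (moyalWeightZ π F G) := by
  rw [hDZ_eq_shiftZ_hDegZ, hDegZ_wmulZPi hF hG, hDZ_eq_shiftZ_hDegZ, hDZ_eq_shiftZ_hDegZ,
    wmulZPi_shiftZ_left, wmulZPi_shiftZ_right]
  rfl

end LaurentMoyal

section WeylLaurent

variable {n : ℕ} {F G : WaZ (2 * n)} {cF cG : ℤ}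

lemma hDZ_wmulZ (F G : WaZ (2 * n)) :
    hDZ (wmulZ F G) = wmulZ (hDZ F) G + wmulZ F (hDZ G) + c1Za F G := by
  unfold c1Za
  abel

lemma c1Za_eq_shiftZ_moyalWeightZ (hF : VanishesBelow cF F) (hG : VanishesBelow cG G) :
    c1Za F G = shiftZ (moyalWeightZ (stdPi n) F G) := by
  simp only [c1Za, wmulZ]
  rw [hDZ_wmulZPi hF hG]
  abel

lemma shiftZ_EulZ_wmulZ (hF : VanishesBelow cF F) (hG : VanishesBelow cG G) :
    shiftZ (EulZ (wmulZ F G))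
      = shiftZ (wmulZ (EulZ F) G) + shiftZ (wmulZ F (EulZ G)) + Complex.I • c1Za F G := by
  rw [c1Za_eq_shiftZ_moyalWeightZ hF hG, wmulZ, EulZ_wmulZPi hF hG]
  rfl

lemma wmulZ_zero_left (G : WaZ (2 * n)) : wmulZ 0 G = 0 := by
  funext m
  simp [wmulZ, wmulZPi, moyalZ, moyalTerm_zero_left]

lemma wmulZ_zero_right (F : WaZ (2 * n)) : wmulZ F 0 = 0 := by
  funext m
  simp [wmulZ, wmulZPi, moyalZ, moyalTerm_zero_right]

lemma c1Za_zero_left (G : WaZ (2 * n)) : c1Za 0 G = 0 := by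
  simp [c1Za, wmulZ_zero_left, hDZ_zero]

lemma c1Za_zero_right (F : WaZ (2 * n)) : c1Za F 0 = 0 := by
  simp [c1Za, wmulZ_zero_right, hDZ_zero]

lemma wmulZ_smul_shiftZ_left (c : ℂ) (F G : WaZ (2 * n)) :
    wmulZ (c • shiftZ F) G = c • shiftZ (wmulZ F G) := by
  rw [wmulZ, wmulZPi_smul_left, wmulZPi_shiftZ_left]
  rfl

lemma wmulZ_smul_shiftZ_right (c : ℂ) (F G : WaZ (2 * n)) :
    wmulZ F (c • shiftZ G) = c • shiftZ (wmulZ F G) := by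
  rw [wmulZ, wmulZPi_smul_right, wmulZPi_shiftZ_right]
  rfl

lemma wmulZ_hDZ_smul_shiftZ_left (c : ℂ) (hF : VanishesBelow cF F) (hG : VanishesBelow cG G) :
    wmulZ (hDZ (c • shiftZ F)) G
      = c • shiftZ (wmulZ (hDZ F) G) - c • shiftZ (shiftZ (wmulZ F G)) := by
  rw [hDZ_smul, hDZ_shiftZ, smul_sub, wmulZ,
    wmulZPi_sub_left (hF.hDZ.shiftZ.smul c) (hF.shiftZ.shiftZ.smul c) hG,
    wmulZPi_smul_left, wmulZPi_smul_left, wmulZPi_shiftZ_left, wmulZPi_shiftZ_left,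
    wmulZPi_shiftZ_left]
  rfl

lemma wmulZ_hDZ_smul_shiftZ_right (c : ℂ) (hF : VanishesBelow cF F) (hG : VanishesBelow cG G) :
    wmulZ F (hDZ (c • shiftZ G))
      = c • shiftZ (wmulZ F (hDZ G)) - c • shiftZ (shiftZ (wmulZ F G)) := by
  rw [hDZ_smul, hDZ_shiftZ, smul_sub, wmulZ,
    wmulZPi_sub_right hF (hG.hDZ.shiftZ.smul c) (hG.shiftZ.shiftZ.smul c),
    wmulZPi_smul_right, wmulZPi_smul_right, wmulZPi_shiftZ_right, wmulZPi_shiftZ_right,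
    wmulZPi_shiftZ_right]
  rfl

end WeylLaurent

section Forms

variable {n : ℕ}

/-- `wMulZF = formProd wmulZ` and `c1ZF = formProd c1Za`. -/
def formProd (μ : WaZ (2 * n) → WaZ (2 * n) → WaZ (2 * n)) (u v : WFZ n) : WFZ n :=
  fun S x => ∑ S1 ∈ S.powerset, shuffleSign S1 (S \ S1) • μ (u S1 x) (v (S \ S1) x)

variable {μ ν : WaZ (2 * n) → WaZ (2 * n) → WaZ (2 * n)} {u v u' v' : WFZ n}
  (S : Finset (Fin (2 * n))) (x : Pt n)

lemma formProd_congr (h : ∀ S1 S2, μ (u S1 x) (v S2 x) = ν (u' S1 x) (v' S2 x)) :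
    formProd μ u v S x = formProd ν u' v' S x :=
  Finset.sum_congr rfl fun S1 _ => by rw [h]

lemma map_formProd (L : WaZ (2 * n) →ₗ[ℂ] WaZ (2 * n)) :
    L (formProd μ u v S x) = formProd (fun F G => L (μ F G)) u v S x := by
  simp only [formProd, map_sum, map_smul]

lemma formProd_add :
    formProd (fun F G => μ F G + ν F G) u v S x = formProd μ u v S x + formProd ν u v S x := by
  simp only [formProd, smul_add, Finset.sum_add_distrib]

lemma formProd_sub :
    formProd (fun F G => μ F G - ν F G) u v S x = formProd μ u v S x - formProd ν u v S x := by
  simp only [formProd, smul_sub, Finset.sum_sub_distrib]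

lemma formProd_eq_zero_of_card_ne {p q : ℕ} (hμl : ∀ G, μ 0 G = 0) (hμr : ∀ F, μ F 0 = 0)
    (hu : isFormZ p u) (hv : isFormZ q v) (hS : S.card ≠ p + q) : formProd μ u v S x = 0 := by
  refine Finset.sum_eq_zero fun S1 hS1 => ?_
  rw [Finset.mem_powerset] at hS1
  by_cases h1 : S1.card = p
  · have h2 : (S \ S1).card ≠ q := by
      rw [Finset.card_sdiff_of_subset hS1]
      have := Finset.card_le_card hS1
      omega
    rw [hv _ h2, Pi.zero_apply, hμr, smul_zero]
  · rw [hu _ h1, Pi.zero_apply, hμl, smul_zero]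

lemma PSupp.vanishesBelow (h : PSupp u) (S : Finset (Fin (2 * n))) (x : Pt n) :
    VanishesBelow 0 (u S x) :=
  fun m hm => h S x m hm

variable (u v)

lemma hDZ_wMulZF :
    hDZ (wMulZF u v S x) = wMulZF (hDZF u) v S x + wMulZF u (hDZF v) S x + c1ZF u v S x :=
  calc hDZ (formProd wmulZ u v S x)
      = formProd (fun F G => hDZ (wmulZ F G)) u v S x := map_formProd S x hDZLin
    _ = formProd (fun F G => wmulZ (hDZ F) G + wmulZ F (hDZ G) + c1Za F G) u v S x :=
      formProd_congr S x fun _ _ => hDZ_wmulZ _ _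
    _ = _ := by rw [formProd_add, formProd_add]; rfl

lemma wMulZF_smul_shiftZ_left (c : ℂ) :
    wMulZF (fun S x => c • shiftZ (u S x)) v S x = c • shiftZ (wMulZF u v S x) :=
  calc formProd wmulZ (fun S x => c • shiftZ (u S x)) v S x
      = formProd (fun F G => c • shiftZ (wmulZ F G)) u v S x :=
        formProd_congr S x fun _ _ => wmulZ_smul_shiftZ_left c _ _
    _ = _ := (map_formProd S x (c • shiftZLin)).symm

lemma wMulZF_smul_shiftZ_right (c : ℂ) :
    wMulZF u (fun S x => c • shiftZ (v S x)) S x = c • shiftZ (wMulZF u v S x) :=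
  calc formProd wmulZ u (fun S x => c • shiftZ (v S x)) S x
      = formProd (fun F G => c • shiftZ (wmulZ F G)) u v S x :=
        formProd_congr S x fun _ _ => wmulZ_smul_shiftZ_right c _ _
    _ = _ := (map_formProd S x (c • shiftZLin)).symm

variable {u v}

lemma shiftZ_EulZ_wMulZF (hu : PSupp u) (hv : PSupp v) :
    shiftZ (EulZ (wMulZF u v S x))
      = shiftZ (wMulZF (EulZF u) v S x) + shiftZ (wMulZF u (EulZF v) S x)
        + Complex.I • c1ZF u v S x :=
  calc shiftZ (EulZ (formProd wmulZ u v S x))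
      = formProd (fun F G => shiftZ (EulZ (wmulZ F G))) u v S x :=
        map_formProd S x (shiftZLin ∘ₗ EulZLin)
    _ = formProd (fun F G => shiftZ (wmulZ (EulZ F) G) + shiftZ (wmulZ F (EulZ G))
          + Complex.I • c1Za F G) u v S x :=
        formProd_congr S x fun S1 S2 =>
          shiftZ_EulZ_wmulZ (hu.vanishesBelow S1 x) (hv.vanishesBelow S2 x)
    _ = shiftZLin (formProd (fun F G => wmulZ (EulZ F) G) u v S x)
          + shiftZLin (formProd (fun F G => wmulZ F (EulZ G)) u v S x)
          + (Complex.I • LinearMap.id : WaZ (2 * n) →ₗ[ℂ] WaZ (2 * n))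
            (formProd c1Za u v S x) := by
      rw [map_formProd, map_formProd, map_formProd, formProd_add, formProd_add]
      rfl

lemma wMulZF_hDZF_smul_shiftZ_left (c : ℂ) (hu : PSupp u) (hv : PSupp v) :
    wMulZF (hDZF fun S x => c • shiftZ (u S x)) v S x
      = c • shiftZ (wMulZF (hDZF u) v S x) - c • shiftZ (shiftZ (wMulZF u v S x)) :=
  calc formProd wmulZ (hDZF fun S x => c • shiftZ (u S x)) v S x
      = formProd (fun F G => c • shiftZ (wmulZ (hDZ F) G) - c • shiftZ (shiftZ (wmulZ F G)))
        u v S x :=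
        formProd_congr S x fun S1 S2 =>
          wmulZ_hDZ_smul_shiftZ_left c (hu.vanishesBelow S1 x) (hv.vanishesBelow S2 x)
    _ = _ := by
      rw [formProd_sub]
      congr 1
      exacts [(map_formProd S x (c • shiftZLin)).symm,
        (map_formProd S x (c • shiftZLin ∘ₗ shiftZLin)).symm]

lemma wMulZF_hDZF_smul_shiftZ_right (c : ℂ) (hu : PSupp u) (hv : PSupp v) :
    wMulZF u (hDZF fun S x => c • shiftZ (v S x)) S x
      = c • shiftZ (wMulZF u (hDZF v) S x) - c • shiftZ (shiftZ (wMulZF u v S x)) :=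
  calc formProd wmulZ u (hDZF fun S x => c • shiftZ (v S x)) S x
      = formProd (fun F G => c • shiftZ (wmulZ F (hDZ G)) - c • shiftZ (shiftZ (wmulZ F G)))
        u v S x :=
        formProd_congr S x fun S1 S2 =>
          wmulZ_hDZ_smul_shiftZ_right c (hu.vanishesBelow S1 x) (hv.vanishesBelow S2 x)
    _ = _ := by
      rw [formProd_sub]
      congr 1
      exacts [(map_formProd S x (c • shiftZLin)).symm,
        (map_formProd S x (c • shiftZLin ∘ₗ shiftZLin)).symm]

lemma neg_one_pow_smul_c1ZF {q : ℕ} (hu : isFormZ 1 u) (hv : isFormZ q v) :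
    (-1 : ℂ) ^ (S.card - 1) • c1ZF v u S x = (-1 : ℂ) ^ q • c1ZF v u S x := by
  by_cases hS : S.card = q + 1
  · rw [hS, Nat.add_sub_cancel]
  · rw [show c1ZF v u S x = formProd c1Za v u S x from rfl,
      formProd_eq_zero_of_card_ne S x c1Za_zero_left c1Za_zero_right hv hu hS, smul_zero,
      smul_zero]

end Forms

section Differentials

variable {n : ℕ}

lemma hDZ_sum {ι : Type*} (s : Finset ι) (f : ι → WaZ (2 * n)) :
    hDZ (∑ i ∈ s, f i) = ∑ i ∈ s, hDZ (f i) :=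
  map_sum hDZLin f s

lemma EulZ_sum {ι : Type*} (s : Finset ι) (f : ι → WaZ (2 * n)) :
    EulZ (∑ i ∈ s, f i) = ∑ i ∈ s, EulZ (f i) :=
  map_sum EulZLin f s

lemma yDaZ_hDZ (i : Fin (2 * n)) (w : WaZ (2 * n)) : yDaZ i (hDZ w) = hDZ (yDaZ i w) :=
  funext fun _ => map_smul (yDLin i) _ _

lemma yDaZ_EulZ (i : Fin (2 * n)) (w : WaZ (2 * n)) :
    yDaZ i (EulZ w) = EulZ (yDaZ i w) - (Complex.I / 2) • yDaZ i w :=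
  funext fun m => eq_sub_of_add_eq (EulW_yD i (w m)).symm

lemma fderiv_const_smul_apply {E : Type*} [NormedAddCommGroup E] [NormedSpace ℝ E] (c : ℂ)
    (g : E → ℂ) (x v : E) :
    fderiv ℝ (fun y => c • g y) x v = c • fderiv ℝ g x v := by
  rw [show (fun y => c • g y) = c • g from rfl, fderiv_const_smul_field]
  rfl

lemma xDZ_hDZF (i : Fin (2 * n)) (a : WFZ n) (T : Finset (Fin (2 * n))) (x : Pt n) :
    xDZ i (hDZF a T) x = hDZ (xDZ i (a T) x) := by
  funext m
  ext β
  simp only [xDZ, hDZF, hDZ, coeff_mk, map_smul]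
  exact fderiv_const_smul_apply _ _ _ _

lemma xDZ_EulZF (i : Fin (2 * n)) (a : WFZ n) (T : Finset (Fin (2 * n))) (x : Pt n) :
    xDZ i (EulZF a T) x = EulZ (xDZ i (a T) x) := by
  funext m
  ext β
  simp only [xDZ, EulZF, EulZ, EulW, coeff_mk, ← smul_eq_mul]
  exact fderiv_const_smul_apply _ _ _ _

variable (a : WFZ n) (S : Finset (Fin (2 * n))) (x : Pt n)

lemma deltaZ_hDZF : deltaZ (hDZF a) S x = hDZ (deltaZ a S x) := by
  simp only [deltaZ, hDZF, yDaZ_hDZ, hDZ_sum, hDZ_smul]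

lemma deltaZ_EulZF :
    deltaZ (EulZF a) S x = EulZ (deltaZ a S x) - (Complex.I / 2) • deltaZ a S x := by
  simp only [deltaZ, EulZF, yDaZ_EulZ, EulZ_sum, EulZ_smul, Finset.smul_sum,
    ← Finset.sum_sub_distrib, smul_sub, smul_comm (Complex.I / 2)]

lemma extDZ_hDZF : extDZ (hDZF a) S x = hDZ (extDZ a S x) := by
  simp only [extDZ, xDZ_hDZF, hDZ_sum, hDZ_smul]

lemma extDZ_EulZF : extDZ (EulZF a) S x = EulZ (extDZ a S x) := by
  simp only [extDZ, xDZ_EulZF, EulZ_sum, EulZ_smul]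

end Differentials

section Commutators

variable {n q : ℕ} {r a : WFZ n} (S : Finset (Fin (2 * n))) (x : Pt n)

theorem fedDZ_hDZF_sub_hDZ_fedDZ (hr : isFormZ 1 r) (hrp : PSupp r) (ha : isFormZ q a)
    (hap : PSupp a) :
    fedDZ r (hDZF a) S x - hDZ (fedDZ r a S x)
      = -comm1Z (hDZF fun S x => Complex.I • shiftZ (r S x)) a S x
        - Complex.I • shiftZ (c1ZF r a S x - (-1 : ℂ) ^ q • c1ZF a r S x) := by
  have hra := hDZ_wMulZF r a S x
  have har := hDZ_wMulZF a r S x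
  rw [← neg_one_pow_smul_c1ZF S x hr ha]
  simp only [fedDZ, comm1Z, deltaZ_hDZF, extDZ_hDZF,
    wMulZF_hDZF_smul_shiftZ_left S x _ hrp hap, wMulZF_hDZF_smul_shiftZ_right S x _ hap hrp,
    hDZ_add, hDZ_sub, hDZ_neg, hDZ_smul, hDZ_shiftZ, hra, har, shiftZ_add, shiftZ_sub,
    shiftZ_smul]
  module

theorem fedDZ_EulZF_sub_EulZ_fedDZ (hr : isFormZ 1 r) (hrp : PSupp r) (ha : isFormZ q a)
    (hap : PSupp a) :
    fedDZ r (EulZF a) S x - EulZ (fedDZ r a S x)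
      = (Complex.I / 2) • deltaZ a S x
        - comm1Z (fun S x => Complex.I • shiftZ (EulZF r S x)) a S x
        + (c1ZF r a S x - (-1 : ℂ) ^ q • c1ZF a r S x) := by
  have hra := shiftZ_EulZ_wMulZF S x hrp hap
  have har := shiftZ_EulZ_wMulZF S x hap hrp
  rw [← neg_one_pow_smul_c1ZF S x hr ha]
  simp only [fedDZ, comm1Z, deltaZ_EulZF, extDZ_EulZF, wMulZF_smul_shiftZ_left (EulZF r) a S x,
    wMulZF_smul_shiftZ_right a (EulZF r) S x, EulZ_add, EulZ_sub, EulZ_neg, EulZ_smul,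
    EulZ_shiftZ, shiftZ_sub, shiftZ_smul, hra, har, smul_add]
  linear_combination (norm := module)
    Complex.I_mul_I • ((-1 : ℂ) ^ (S.card - 1) • c1ZF a r S x - c1ZF r a S x)

end Commutators

theorem commutators_with_fedosov_general (n q : ℕ) (r a : WFZ n)
    (hr : isFormZ 1 r) (hrp : PSupp r)
    (ha : isFormZ q a) (hap : PSupp a) :
    (fedDZ r (hDZF a) - hDZF (fedDZ r a) =
      -comm1Z (hDZF fun S x => Complex.I • shiftZ (r S x)) a
        - fun S x =>
            Complex.I • shiftZ ((c1ZF r a - (-1 : ℂ) ^ q • c1ZF a r) S x)) ∧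
    (fedDZ r (EulZF a) - EulZF (fedDZ r a) =
      (fun S x => (Complex.I / 2) • deltaZ a S x)
        - comm1Z (fun S x => Complex.I • shiftZ (EulZF r S x)) a
        + (c1ZF r a - (-1 : ℂ) ^ q • c1ZF a r)) :=
  ⟨funext fun S => funext fun x => fedDZ_hDZF_sub_hDZ_fedDZ S x hr hrp ha hap,
    funext fun S => funext fun x => fedDZ_EulZF_sub_EulZ_fedDZ S x hr hrp ha hap⟩

/-- For a `W`-valued 1-form `r` on `ℝ^{2n}`, `D = −δ + d + (i/ℏ)[r,·]`
and any `W`-valued form `a` of homogeneous degree `q` (working with Laurent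
coefficients in `ℏ`):
(i) `[D, ∂/∂ℏ] a = −[(i r/ℏ)˙, a] − (i/ℏ)(c₁(r,a) − (−1)^q c₁(a,r))`;
(ii) `[D, E] a = (i/2) δa − [(i/ℏ) Er, a] + c₁(r,a) − (−1)^q c₁(a,r)`. -/
theorem commutators_with_fedosov (n q : ℕ) (r a : WFZ n)
    (hr : isFormZ 1 r) (hrs : WFZ.Smooth r) (hrp : PSupp r)
    (ha : isFormZ q a) (has : WFZ.Smooth a) (hap : PSupp a) :
    (fedDZ r (hDZF a) - hDZF (fedDZ r a) =
      -comm1Z (hDZF fun S x => Complex.I • shiftZ (r S x)) a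
        - fun S x =>
            Complex.I • shiftZ ((c1ZF r a - (-1 : ℂ) ^ q • c1ZF a r) S x)) ∧
    (fedDZ r (EulZF a) - EulZF (fedDZ r a) =
      (fun S x => (Complex.I / 2) • deltaZ a S x)
        - comm1Z (fun S x => Complex.I • shiftZ (EulZF r S x)) a
        + (c1ZF r a - (-1 : ℂ) ^ q • c1ZF a r)) :=
  commutators_with_fedosov_general n q r a hr hrp ha hap

end StarPaper
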